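/- arXiv:0810.4357 — 5 statements merged into one kernel-verified Lean document; each statement's English description precedes it below -/
import Mathlib

section
/- Let u(s) = (s²-1)² + (s-1)² and for μ > 0 define f(μ) = (∫_1^R √(μ+u(s))/s ds) · (∫_1^R 1/(s√(μ+u(s))) ds), where R > 1. Then f is strictly decreasing on (0,∞). -/
/-!
Writing `p = μ + u s`, `q = μ + u t`, the product of the two integrals symmetrizes to
`½ ∬ (√(p/q) + √(q/p)) / (s t) ds dt`, and `√(p/q) + √(q/p) = √(4 + (u s - u t)² / (p q))`.
As `μ` grows the denominator `p q` grows while the numerator stays fixed, so the integrand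
decreases, strictly wherever `u s ≠ u t`; since `u` is injective on `[1, R]`, this happens on a
set of positive measure.
-/

open MeasureTheory Real Set

theorem sqrt_div_sqrt_add_sqrt_div_sqrt {p q : ℝ} (hp : 0 < p) (hq : 0 < q) :
    √p / √q + √q / √p = √(4 + (p - q) ^ 2 / (p * q)) := by
  have hsp := Real.sqrt_pos.2 hp
  have hsq := Real.sqrt_pos.2 hq
  rw [eq_comm, Real.sqrt_eq_iff_mul_self_eq (by positivity) (by positivity)]
  field_simp
  rw [Real.sq_sqrt hp.le, Real.sq_sqrt hq.le]
  ring

theorem strictAntiOn_sqrt_div_sqrt_add_sqrt_div_sqrt {a b : ℝ} (ha : 0 ≤ a) (hb : 0 ≤ b)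
    (hab : a ≠ b) :
    StrictAntiOn (fun κ => √(κ + a) / √(κ + b) + √(κ + b) / √(κ + a)) (Ioi 0) := by
  intro μ (hμ : 0 < μ) ν (hν : 0 < ν) hμν
  have hden : (μ + a) * (μ + b) < (ν + a) * (ν + b) := by nlinarith
  have hnum : 0 < (a - b) ^ 2 := by positivity [sub_ne_zero.2 hab]
  simp only [sqrt_div_sqrt_add_sqrt_div_sqrt (add_pos_of_pos_of_nonneg hμ ha)
    (add_pos_of_pos_of_nonneg hμ hb), sqrt_div_sqrt_add_sqrt_div_sqrt
    (add_pos_of_pos_of_nonneg hν ha) (add_pos_of_pos_of_nonneg hν hb), add_sub_add_left_eq_sub]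
  exact Real.sqrt_lt_sqrt (by positivity) (by gcongr)

theorem antitoneOn_sqrt_div_sqrt_add_sqrt_div_sqrt {a b : ℝ} (ha : 0 ≤ a) (hb : 0 ≤ b) :
    AntitoneOn (fun κ => √(κ + a) / √(κ + b) + √(κ + b) / √(κ + a)) (Ioi 0) := by
  rcases eq_or_ne a b with rfl | hab
  · intro μ (hμ : 0 < μ) ν (hν : 0 < ν) _
    have hsμ : √(μ + a) ≠ 0 := by positivity
    have hsν : √(ν + a) ≠ 0 := by positivity
    simp only [div_self hsμ, div_self hsν, le_refl]
  · exact (strictAntiOn_sqrt_div_sqrt_add_sqrt_div_sqrt ha hb hab).antitoneOn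

section

variable {α : Type*} [MeasurableSpace α] {ρ : Measure α} [SFinite ρ]

theorem two_mul_integral_mul_integral_eq_integral_prod {f g : α → ℝ} (hf : Integrable f ρ)
    (hg : Integrable g ρ) :
    2 * ((∫ x, f x ∂ρ) * ∫ x, g x ∂ρ) = ∫ p, (f p.1 * g p.2 + f p.2 * g p.1) ∂ρ.prod ρ := by
  have hgf : ∫ p : α × α, f p.2 * g p.1 ∂ρ.prod ρ = (∫ x, g x ∂ρ) * ∫ x, f x ∂ρ := by
    simp only [mul_comm (f _)]
    exact integral_prod_mul g f
  rw [integral_add (hf.mul_prod hg) (by simpa only [mul_comm] using hg.mul_prod hf), hgf,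
    integral_prod_mul]
  ring

theorem strictAntiOn_integral_mul_sqrt_mul_integral_div_sqrt {w u : α → ℝ}
    (hu : ∀ᵐ x ∂ρ, 0 ≤ u x) (hw : ∀ᵐ x ∂ρ, 0 < w x)
    (hF : ∀ κ, 0 < κ → Integrable (fun x => w x * √(κ + u x)) ρ)
    (hG : ∀ κ, 0 < κ → Integrable (fun x => w x / √(κ + u x)) ρ)
    (hne : ρ.prod ρ {p | u p.1 ≠ u p.2} ≠ 0) :
    StrictAntiOn (fun κ => (∫ x, w x * √(κ + u x) ∂ρ) * ∫ x, w x / √(κ + u x) ∂ρ)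
      (Ioi 0) := by
  intro μ (hμ : 0 < μ) ν (hν : 0 < ν) hμν
  let S : ℝ → α × α → ℝ := fun κ p => w p.1 * √(κ + u p.1) * (w p.2 / √(κ + u p.2)) +
    w p.2 * √(κ + u p.2) * (w p.1 / √(κ + u p.1))
  have hS : ∀ κ, 0 < κ → Integrable (S κ) (ρ.prod ρ) := fun κ hκ =>
    ((hF κ hκ).mul_prod (hG κ hκ)).add ((hF κ hκ).mul_prod (hG κ hκ)).swap
  have hsymm : ∀ κ, 0 < κ →
      2 * ((∫ x, w x * √(κ + u x) ∂ρ) * ∫ x, w x / √(κ + u x) ∂ρ) = ∫ p, S κ p ∂ρ.prod ρ :=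
    fun κ hκ => two_mul_integral_mul_integral_eq_integral_prod (hF κ hκ) (hG κ hκ)
  have hS_eq : ∀ κ p, S κ p =
      w p.1 * w p.2 * (√(κ + u p.1) / √(κ + u p.2) + √(κ + u p.2) / √(κ + u p.1)) := by
    intro κ p
    ring
  have hgood : ∀ᵐ p ∂ρ.prod ρ, (0 ≤ u p.1 ∧ 0 < w p.1) ∧ (0 ≤ u p.2 ∧ 0 < w p.2) :=
    (Measure.quasiMeasurePreserving_fst.ae (hu.and hw)).and
      (Measure.quasiMeasurePreserving_snd.ae (hu.and hw))
  have hpos : 0 < ∫ p, (S μ p - S ν p) ∂ρ.prod ρ := by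
    rw [integral_pos_iff_support_of_nonneg_ae]
    · refine (pos_iff_ne_zero.2 hne).trans_le (measure_mono_ae ?_)
      filter_upwards [hgood] with p ⟨⟨hu₁, hw₁⟩, hu₂, hw₂⟩ (hp : u p.1 ≠ u p.2)
      change S μ p - S ν p ≠ 0
      rw [hS_eq, hS_eq, ← mul_sub]
      exact (mul_pos (mul_pos hw₁ hw₂) (sub_pos.2
        (strictAntiOn_sqrt_div_sqrt_add_sqrt_div_sqrt hu₁ hu₂ hp hμ hν hμν))).ne'
    · filter_upwards [hgood] with p ⟨⟨hu₁, hw₁⟩, hu₂, hw₂⟩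
      rw [Pi.zero_apply, hS_eq, hS_eq, ← mul_sub]
      exact mul_nonneg (mul_pos hw₁ hw₂).le (sub_nonneg.2
        (antitoneOn_sqrt_div_sqrt_add_sqrt_div_sqrt hu₁ hu₂ hμ hν hμν.le))
    · exact (hS μ hμ).sub (hS ν hν)
  rw [integral_sub (hS μ hμ) (hS ν hν), ← hsymm μ hμ, ← hsymm ν hν] at hpos
  linarith

end

theorem prod_restrict_Ioc_setOf_ne_ne_zero {a b : ℝ} (hab : a < b) {u : ℝ → ℝ}
    (hu : InjOn u (Ioc a b)) :
    (volume.restrict (Ioc a b)).prod (volume.restrict (Ioc a b)) {p | u p.1 ≠ u p.2} ≠ 0 := by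
  obtain ⟨m, ham, hmb⟩ := exists_between hab
  have hsub : Ioo a m ×ˢ Ioo m b ⊆ {p | u p.1 ≠ u p.2} := by
    rintro ⟨s, t⟩ ⟨hs, ht⟩ hst
    have := hu ⟨hs.1, (hs.2.trans hmb).le⟩ ⟨ham.trans ht.1, ht.2.le⟩ hst
    linarith [hs.2, ht.1]
  refine (measure_pos_of_superset hsub ?_).ne'
  rw [Measure.prod_prod,
    Measure.restrict_eq_self _ (Ioo_subset_Ioc_self.trans (Ioc_subset_Ioc_right hmb.le)),
    Measure.restrict_eq_self _ (Ioo_subset_Ioc_self.trans (Ioc_subset_Ioc_left ham.le)),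
    Real.volume_Ioo, Real.volume_Ioo]
  simp [ham, hmb]

theorem strictMonoOn_sq_sub_one_sq_add_sub_one_sq :
    StrictMonoOn (fun s : ℝ => (s ^ 2 - 1) ^ 2 + (s - 1) ^ 2) (Ici 1) := by
  intro s (hs : 1 ≤ s) t (ht : 1 ≤ t) hst
  have h₁ : (s - 1) ^ 2 < (t - 1) ^ 2 := by nlinarith
  have h₂ : (s ^ 2 - 1) ^ 2 ≤ (t ^ 2 - 1) ^ 2 := by nlinarith
  exact add_lt_add_of_le_of_lt h₂ h₁

theorem stmt_3 (R : ℝ) (hR : 1 < R) :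
    StrictAntiOn (fun μ : ℝ =>
      (∫ s in (1:ℝ)..R, Real.sqrt (μ + ((s ^ 2 - 1) ^ 2 + (s - 1) ^ 2)) / s) *
      (∫ s in (1:ℝ)..R, 1 / (s * Real.sqrt (μ + ((s ^ 2 - 1) ^ 2 + (s - 1) ^ 2)))))
      (Set.Ioi 0) := by
  set u : ℝ → ℝ := fun s => (s ^ 2 - 1) ^ 2 + (s - 1) ^ 2
  have hu : ∀ s, 0 ≤ u s := fun s => by positivity
  have hsqrt : ∀ κ, Continuous fun s => √(κ + u s) := fun κ => by fun_prop
  have hinv : ContinuousOn (fun s : ℝ => s⁻¹) (Icc 1 R) :=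
    continuousOn_id.inv₀ fun s hs => (zero_lt_one.trans_le hs.1).ne'
  have hF (κ : ℝ) : IntegrableOn (fun s => s⁻¹ * √(κ + u s)) (Ioc 1 R) :=
    (hinv.mul (hsqrt κ).continuousOn).integrableOn_Icc.mono_set Ioc_subset_Icc_self
  have hG (κ : ℝ) (hκ : 0 < κ) : IntegrableOn (fun s => s⁻¹ / √(κ + u s)) (Ioc 1 R) :=
    (hinv.div (hsqrt κ).continuousOn fun s _ => (Real.sqrt_pos.2 (by linarith [hu s])).ne')
      |>.integrableOn_Icc.mono_set Ioc_subset_Icc_self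
  have key := strictAntiOn_integral_mul_sqrt_mul_integral_div_sqrt
    (ρ := volume.restrict (Ioc 1 R)) (w := fun s => s⁻¹) (ae_of_all _ hu)
    ((ae_restrict_iff' measurableSet_Ioc).2 (ae_of_all _ fun s hs => inv_pos.2 (by linarith [hs.1])))
    (fun κ _ => hF κ) hG
    (prod_restrict_Ioc_setOf_ne_ne_zero hR
      (strictMonoOn_sq_sub_one_sq_add_sub_one_sq.injOn.mono
        (Ioc_subset_Icc_self.trans Icc_subset_Ici_self)))
  convert key using 3 with κ
  all_goals rw [intervalIntegral.integral_of_le hR.le]; congr 1 with s; ring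
end

section
/- Let u(s) = (s²-1)² + (s-1)² and for μ > 0 define f(μ) = (∫_1^R √(μ+u(s))/s ds) · (∫_1^R 1/(s√(μ+u(s))) ds), where R > 1. Then f(μ) → (log R)² as μ → ∞ and f(μ) → +∞ as μ → 0⁺. -/
/-- The product of integrals `f(μ)` from the paper. -/
noncomputable def morphF (R μ : ℝ) : ℝ :=
  (∫ s in (1:ℝ)..R, Real.sqrt (μ + ((s ^ 2 - 1) ^ 2 + (s - 1) ^ 2)) / s) *
  (∫ s in (1:ℝ)..R, 1 / (s * Real.sqrt (μ + ((s ^ 2 - 1) ^ 2 + (s - 1) ^ 2))))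

/-!
Write `f(μ) = A(μ) B(μ)` for the two integral factors. On `[1, R]` we have `0 ≤ u ≤ u(R)`, so
`A(μ)` lies between `√μ log R` and `√(μ + u(R)) log R`, and `B(μ)` between the reciprocal bounds;
hence `f(μ)` lies between `(log R)² / ρ` and `(log R)² ρ` with `ρ = √(μ + u(R)) / √μ → 1`.

As `μ → 0⁺`, `A(μ) ≥ A(0) > 0`. Since `u(s) = ((s + 1)² + 1)(s - 1)²` has a double zero at `s = 1`,
`√(μ + u(s)) ≤ √μ + k (s - 1)` with `k = √((R + 1)² + 1)`, so
`B(μ) ≥ (R k)⁻¹ log (1 + k (R - 1) / √μ) → ∞`.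
-/

open Real Filter Set intervalIntegral MeasureTheory Topology

lemma integral_const_div_id {R : ℝ} (hR : 0 < R) (c : ℝ) :
    ∫ s in (1:ℝ)..R, c / s = c * log R := by
  simp only [div_eq_mul_inv, intervalIntegral.integral_const_mul, integral_inv_of_pos one_pos hR,
    inv_one, mul_one]

lemma intervalIntegrable_div_id {R : ℝ} (hR : 1 ≤ R) {F : ℝ → ℝ}
    (hF : ContinuousOn F (Icc 1 R)) : IntervalIntegrable (fun s => F s / s) volume 1 R :=
  (hF.div continuousOn_id fun _ hs => (zero_lt_one.trans_le hs.1).ne').intervalIntegrable_of_Icc hR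

lemma integral_div_id_mem_Icc {R m M : ℝ} (hR : 1 ≤ R) {F : ℝ → ℝ}
    (hF : ContinuousOn F (Icc 1 R)) (hFmM : ∀ s ∈ Icc 1 R, F s ∈ Icc m M) :
    ∫ s in (1:ℝ)..R, F s / s ∈ Icc (m * log R) (M * log R) := by
  have hR0 : 0 < R := by linarith
  have hconst (c : ℝ) := intervalIntegrable_div_id hR (continuousOn_const (c := c))
  rw [← integral_const_div_id hR0, ← integral_const_div_id hR0]
  constructor
  · refine integral_mono_on hR (hconst m) (intervalIntegrable_div_id hR hF) fun s hs => ?_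
    exact div_le_div_of_nonneg_right (hFmM s hs).1 (by linarith [hs.1])
  · refine integral_mono_on hR (intervalIntegrable_div_id hR hF) (hconst M) fun s hs => ?_
    exact div_le_div_of_nonneg_right (hFmM s hs).2 (by linarith [hs.1])

lemma integral_inv_add_mul_sub_one {R a b : ℝ} (hR : 1 ≤ R) (ha : 0 < a) (hb : 0 < b) :
    ∫ s in (1:ℝ)..R, (a + b * (s - 1))⁻¹ = b⁻¹ * log (1 + b * (R - 1) / a) := by
  have hlin : ∀ s, a + b * (s - 1) = b * s + (a - b) := fun s => by ring
  simp_rw [hlin]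
  rw [integral_comp_mul_add (fun t => t⁻¹) hb.ne', integral_inv_of_pos (by linarith) (by nlinarith),
    smul_eq_mul, mul_one, add_sub_cancel]
  congr 2
  field_simp
  ring

lemma tendsto_integral_inv_add_mul_sub_one {R b : ℝ} (hR : 1 < R) (hb : 0 < b) :
    Tendsto (fun a => ∫ s in (1:ℝ)..R, (a + b * (s - 1))⁻¹) (𝓝[>] 0) atTop := by
  have hlog : Tendsto (fun a => b⁻¹ * log (1 + b * (R - 1) / a)) (𝓝[>] 0) atTop := by
    refine Tendsto.const_mul_atTop (inv_pos.2 hb) (tendsto_log_atTop.comp ?_)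
    refine tendsto_atTop_add_const_left _ 1 ?_
    exact (tendsto_inv_nhdsGT_zero.const_mul_atTop (mul_pos hb (by linarith))).congr
      fun a => (div_eq_mul_inv _ _).symm
  refine hlog.congr' ?_
  filter_upwards [self_mem_nhdsWithin] with a ha
  exact (integral_inv_add_mul_sub_one hR.le ha hb).symm

lemma tendsto_sqrt_add_div_sqrt_atTop (M : ℝ) :
    Tendsto (fun μ => √(μ + M) / √μ) atTop (𝓝 1) := by
  have h : Tendsto (fun μ : ℝ => √(1 + M * μ⁻¹)) atTop (𝓝 1) := by
    simpa using ((tendsto_inv_atTop_zero.const_mul M).const_add 1).sqrt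
  refine h.congr' ?_
  filter_upwards [eventually_gt_atTop 0] with μ hμ
  rw [← sqrt_div' _ hμ.le]
  congr 1
  field_simp

lemma tendsto_sqrt_nhdsGT_zero : Tendsto sqrt (𝓝[>] 0) (𝓝[>] 0) :=
  tendsto_nhdsWithin_of_tendsto_nhds_of_eventually_within _
    (by simpa using (continuous_sqrt.tendsto 0).mono_left nhdsWithin_le_nhds)
    (eventually_mem_nhdsWithin.mono fun _ hμ => sqrt_pos.2 hμ)

namespace MorphF

noncomputable def u (s : ℝ) : ℝ := (s ^ 2 - 1) ^ 2 + (s - 1) ^ 2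

lemma u_nonneg (s : ℝ) : 0 ≤ u s := by unfold u; positivity

lemma continuous_u : Continuous u := by unfold u; fun_prop

lemma u_pos {s : ℝ} (hs : 1 < s) : 0 < u s := by
  have : 0 < (s - 1) ^ 2 := pow_pos (sub_pos.2 hs) 2
  unfold u; positivity

lemma u_le_u {R s : ℝ} (hs : s ∈ Icc 1 R) : u s ≤ u R := by
  obtain ⟨h1, h2⟩ := hs
  unfold u
  gcongr
  nlinarith

lemma u_le_mul_sq {R s : ℝ} (hs : s ∈ Icc 1 R) : u s ≤ ((R + 1) ^ 2 + 1) * (s - 1) ^ 2 := by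
  obtain ⟨h1, h2⟩ := hs
  calc u s = ((s + 1) ^ 2 + 1) * (s - 1) ^ 2 := by unfold u; ring
    _ ≤ _ := by gcongr

lemma sqrt_add_u_le {R μ s : ℝ} (hμ : 0 ≤ μ) (hs : s ∈ Icc 1 R) :
    √(μ + u s) ≤ √μ + √((R + 1) ^ 2 + 1) * (s - 1) := by
  have hs1 : 0 ≤ s - 1 := by linarith [hs.1]
  rw [sqrt_le_iff]
  refine ⟨by positivity, ?_⟩
  have hcross : 0 ≤ √μ * √((R + 1) ^ 2 + 1) * (s - 1) := by positivity
  nlinarith [u_le_mul_sq hs, sq_sqrt hμ, sq_sqrt (by positivity : (0:ℝ) ≤ (R + 1) ^ 2 + 1)]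

lemma morphF_eq (R μ : ℝ) :
    morphF R μ = (∫ s in (1:ℝ)..R, √(μ + u s) / s) * ∫ s in (1:ℝ)..R, (√(μ + u s))⁻¹ / s := by
  unfold morphF u
  congr 2
  ext s
  ring

lemma morphF_mem_Icc {R μ : ℝ} (hR : 1 ≤ R) (hμ : 0 < μ) :
    morphF R μ ∈ Icc (log R ^ 2 / (√(μ + u R) / √μ)) (log R ^ 2 * (√(μ + u R) / √μ)) := by
  have hlog : 0 ≤ log R := log_nonneg hR
  have hsqrt_pos (s : ℝ) : 0 < √(μ + u s) := sqrt_pos.2 (by linarith [u_nonneg s])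
  have hcont : ContinuousOn (fun s => √(μ + u s)) (Icc 1 R) :=
    (continuous_u.const_add μ).sqrt.continuousOn
  have hbound (s : ℝ) (hs : s ∈ Icc 1 R) : √(μ + u s) ∈ Icc √μ √(μ + u R) :=
    ⟨sqrt_le_sqrt (by linarith [u_nonneg s]), sqrt_le_sqrt (by linarith [u_le_u hs])⟩
  have hA := integral_div_id_mem_Icc hR hcont hbound
  have hB := integral_div_id_mem_Icc hR (hcont.inv₀ fun s _ => (hsqrt_pos s).ne') fun s hs =>
    ⟨inv_anti₀ (hsqrt_pos s) (hbound s hs).2, inv_anti₀ (sqrt_pos.2 hμ) (hbound s hs).1⟩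
  have hsμ := sqrt_pos.2 hμ
  rw [morphF_eq]
  constructor
  · calc log R ^ 2 / (√(μ + u R) / √μ) = (√μ * log R) * ((√(μ + u R))⁻¹ * log R) := by
          field_simp
      _ ≤ _ := mul_le_mul hA.1 hB.1 (by positivity) (by linarith [hA.1, mul_nonneg hsμ.le hlog])
  · calc _ ≤ (√(μ + u R) * log R) * ((√μ)⁻¹ * log R) :=
          mul_le_mul hA.2 hB.2 (by linarith [hB.1, mul_nonneg (inv_nonneg.2 (hsqrt_pos R).le) hlog])
            (by positivity)
      _ = log R ^ 2 * (√(μ + u R) / √μ) := by field_simp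

lemma tendsto_morphF_atTop {R : ℝ} (hR : 1 ≤ R) : Tendsto (morphF R) atTop (𝓝 (log R ^ 2)) := by
  have hρ := tendsto_sqrt_add_div_sqrt_atTop (u R)
  refine tendsto_of_tendsto_of_tendsto_of_le_of_le'
    (by simpa using tendsto_const_nhds.div hρ one_ne_zero)
    (by simpa using tendsto_const_nhds.mul hρ) ?_ ?_
  · filter_upwards [eventually_gt_atTop 0] with μ hμ using (morphF_mem_Icc hR hμ).1
  · filter_upwards [eventually_gt_atTop 0] with μ hμ using (morphF_mem_Icc hR hμ).2

lemma integral_sqrt_u_div_id_pos {R : ℝ} (hR : 1 < R) : 0 < ∫ s in (1:ℝ)..R, √(u s) / s :=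
  intervalIntegral_pos_of_pos_on (intervalIntegrable_div_id hR.le continuous_u.sqrt.continuousOn)
    (fun s hs => div_pos (sqrt_pos.2 (u_pos hs.1)) (by linarith [hs.1])) hR

lemma integral_mul_integral_inv_le_morphF {R μ : ℝ} (hR : 1 < R) (hμ : 0 < μ) :
    (∫ s in (1:ℝ)..R, √(u s) / s) *
      (R⁻¹ * ∫ s in (1:ℝ)..R, (√μ + √((R + 1) ^ 2 + 1) * (s - 1))⁻¹) ≤ morphF R μ := by
  set k := √((R + 1) ^ 2 + 1)
  have hk : 0 < k := sqrt_pos.2 (by positivity)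
  have hsqrt_pos (s : ℝ) : 0 < √(μ + u s) := sqrt_pos.2 (by linarith [u_nonneg s])
  have hcont : ContinuousOn (fun s => √(μ + u s)) (Icc 1 R) :=
    (continuous_u.const_add μ).sqrt.continuousOn
  have hlin_pos (s : ℝ) (hs : s ∈ Icc 1 R) : 0 < √μ + k * (s - 1) := by
    have : 0 ≤ k * (s - 1) := mul_nonneg hk.le (by linarith [hs.1])
    linarith [sqrt_pos.2 hμ]
  have hA : ∫ s in (1:ℝ)..R, √(u s) / s ≤ ∫ s in (1:ℝ)..R, √(μ + u s) / s :=
    integral_mono_on hR.le (intervalIntegrable_div_id hR.le continuous_u.sqrt.continuousOn)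
      (intervalIntegrable_div_id hR.le hcont) fun s hs =>
        div_le_div_of_nonneg_right (sqrt_le_sqrt (by linarith)) (by linarith [hs.1])
  have hB : R⁻¹ * ∫ s in (1:ℝ)..R, (√μ + k * (s - 1))⁻¹ ≤
      ∫ s in (1:ℝ)..R, (√(μ + u s))⁻¹ / s := by
    rw [← intervalIntegral.integral_const_mul]
    refine integral_mono_on hR.le ?_ (intervalIntegrable_div_id hR.le
      (hcont.inv₀ fun s _ => (hsqrt_pos s).ne')) fun s hs => ?_
    · refine ContinuousOn.intervalIntegrable_of_Icc hR.le (continuousOn_const.mul ?_)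
      exact (Continuous.continuousOn (by fun_prop)).inv₀ fun s hs => (hlin_pos s hs).ne'
    · rw [div_eq_mul_inv, ← mul_inv, ← mul_inv]
      refine inv_anti₀ (mul_pos (hsqrt_pos s) (by linarith [hs.1])) ?_
      rw [mul_comm]
      exact mul_le_mul hs.2 (sqrt_add_u_le hμ.le hs) (sqrt_nonneg _) (by linarith)
  rw [morphF_eq]
  refine mul_le_mul hA hB ?_ (hA.trans' (integral_sqrt_u_div_id_pos hR).le)
  exact mul_nonneg (inv_nonneg.2 (by linarith)) (intervalIntegral.integral_nonneg hR.le
    fun s hs => (inv_pos.2 (hlin_pos s hs)).le)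

lemma tendsto_morphF_nhdsGT_zero {R : ℝ} (hR : 1 < R) : Tendsto (morphF R) (𝓝[>] 0) atTop := by
  have hk : 0 < √((R + 1) ^ 2 + 1) := sqrt_pos.2 (by positivity)
  have hB := (tendsto_integral_inv_add_mul_sub_one hR hk).comp tendsto_sqrt_nhdsGT_zero
  have hlower := (hB.const_mul_atTop (inv_pos.2 (by linarith : (0:ℝ) < R))).const_mul_atTop
    (integral_sqrt_u_div_id_pos hR)
  refine tendsto_atTop_mono' _ ?_ hlower
  filter_upwards [self_mem_nhdsWithin] with μ hμ using integral_mul_integral_inv_le_morphF hR hμ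

end MorphF

open MorphF

theorem stmt_4 (R : ℝ) (hR : 1 < R) :
    Filter.Tendsto (morphF R) Filter.atTop (nhds ((Real.log R) ^ 2)) ∧
    Filter.Tendsto (morphF R) (nhdsWithin 0 (Set.Ioi 0)) Filter.atTop :=
  ⟨tendsto_morphF_atTop hR.le, tendsto_morphF_nhdsGT_zero hR⟩
end

section
/- Let R > 1 and A > (log R)². With u(s) = (s²-1)² + (s-1)² and f(μ) = (∫_1^R √(μ+u(s))/s ds)(∫_1^R ds/(s√(μ+u(s)))), there exists a unique μ > 0 with f(μ) = A. -/
/-!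
Symmetrising the product of the two integrals over `[1, R]` gives
`2 f(μ) = ∬ (√(X/Y) + √(Y/X)) / (s t)` with `X = μ + u(s)`, `Y = μ + u(t)`. Since
`(√(X/Y) + √(Y/X))² = 4 + (u(s) - u(t))² / (X Y)`, the integrand decreases in `μ`, strictly where
`u(s) ≠ u(t)`, and is at least `2`, so `f(μ) ≥ (log R)²`. Together with
`f(μ) ≤ √(1 + u(R)/μ) (log R)²` this gives the limit `(log R)²` at `+∞`. Near `μ = 0`,
`√(μ + u(s)) ≤ (R + 2)(√μ + s - 1)` because `u` vanishes to second order at `1`, so the second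
factor grows like `log (1/√μ)` while the first stays bounded below. The intermediate value theorem
on `(0, ∞)` and strict monotonicity finish the proof.
-/

open MeasureTheory Real Set Filter Topology

noncomputable def sqrtRatioSum (x y : ℝ) : ℝ := √x / √y + √y / √x

lemma sqrtRatioSum_self {x : ℝ} (hx : 0 < x) : sqrtRatioSum x x = 2 := by
  have : √x ≠ 0 := (sqrt_pos.2 hx).ne'
  simp [sqrtRatioSum, this]; norm_num

lemma sqrtRatioSum_sq {x y : ℝ} (hx : 0 < x) (hy : 0 < y) :
    sqrtRatioSum x y ^ 2 = 4 + (x - y) ^ 2 / (x * y) := by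
  have hx' := sqrt_pos.2 hx
  have hy' := sqrt_pos.2 hy
  unfold sqrtRatioSum
  field_simp
  rw [sq_sqrt hx.le, sq_sqrt hy.le]
  ring

lemma sqrtRatioSum_pos {x y : ℝ} (hx : 0 < x) (hy : 0 < y) : 0 < sqrtRatioSum x y := by
  have hx' := sqrt_pos.2 hx
  have hy' := sqrt_pos.2 hy
  unfold sqrtRatioSum; positivity

lemma two_le_sqrtRatioSum {x y : ℝ} (hx : 0 < x) (hy : 0 < y) : 2 ≤ sqrtRatioSum x y := by
  have h : (2 : ℝ) ^ 2 ≤ sqrtRatioSum x y ^ 2 := by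
    rw [sqrtRatioSum_sq hx hy]
    have : 0 ≤ (x - y) ^ 2 / (x * y) := by positivity
    linarith
  exact (pow_le_pow_iff_left₀ zero_le_two (sqrtRatioSum_pos hx hy).le two_ne_zero).1 h

lemma strictAntiOn_sqrtRatioSum_add {a b : ℝ} (ha : 0 ≤ a) (hb : 0 ≤ b) (hab : a ≠ b) :
    StrictAntiOn (fun μ ↦ sqrtRatioSum (μ + a) (μ + b)) (Ioi 0) := by
  intro μ₁ (h₁ : 0 < μ₁) μ₂ (h₂ : 0 < μ₂) h₁₂
  have hsq : sqrtRatioSum (μ₂ + a) (μ₂ + b) ^ 2 < sqrtRatioSum (μ₁ + a) (μ₁ + b) ^ 2 := by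
    rw [sqrtRatioSum_sq (by linarith) (by linarith), sqrtRatioSum_sq (by linarith) (by linarith)]
    have : (a - b) ^ 2 / ((μ₂ + a) * (μ₂ + b)) < (a - b) ^ 2 / ((μ₁ + a) * (μ₁ + b)) :=
      div_lt_div_of_pos_left (by positivity [sub_ne_zero.2 hab]) (by positivity) (by nlinarith)
    simp only [add_sub_add_left_eq_sub]
    linarith
  exact lt_of_pow_lt_pow_left₀ 2 (sqrtRatioSum_pos (by linarith) (by linarith)).le hsq

lemma antitoneOn_sqrtRatioSum_add {a b : ℝ} (ha : 0 ≤ a) (hb : 0 ≤ b) :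
    AntitoneOn (fun μ ↦ sqrtRatioSum (μ + a) (μ + b)) (Ioi 0) := by
  rcases eq_or_ne a b with rfl | hab
  · intro μ₁ (h₁ : 0 < μ₁) μ₂ (h₂ : 0 < μ₂) _
    simp only [sqrtRatioSum_self (by linarith : 0 < μ₁ + a),
      sqrtRatioSum_self (by linarith : 0 < μ₂ + a), le_refl]
  · exact (strictAntiOn_sqrtRatioSum_add ha hb hab).antitoneOn

section Integrals

variable {α : Type*} [MeasurableSpace α] {ν : Measure α}

theorem integral_mul_integral_eq_half_integral_symm [SFinite ν] {f g : α → ℝ}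
    (hf : Integrable f ν) (hg : Integrable g ν) :
    (∫ x, f x ∂ν) * ∫ x, g x ∂ν = (∫ p, (f p.1 * g p.2 + g p.1 * f p.2) ∂ν.prod ν) / 2 := by
  rw [integral_add (hf.mul_prod hg) (hg.mul_prod hf), integral_prod_mul, integral_prod_mul]
  ring

theorem integral_lt_integral_of_ae_le_of_lt_on {f g : α → ℝ} {s : Set α}
    (hf : Integrable f ν) (hg : Integrable g ν) (hle : f ≤ᵐ[ν] g) (hs : ν s ≠ 0)
    (hlt : ∀ x ∈ s, f x < g x) : ∫ x, f x ∂ν < ∫ x, g x ∂ν := by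
  have hpos : 0 < ∫ x, (g - f) x ∂ν := by
    refine (integral_pos_iff_support_of_nonneg_ae ?_ (hg.sub hf)).2 ?_
    · filter_upwards [hle] with x hx using sub_nonneg.2 hx
    · refine (pos_iff_ne_zero.2 hs).trans_le (measure_mono fun x hx ↦ ?_)
      exact sub_ne_zero.2 (hlt x hx).ne'
  rw [integral_sub' hg hf] at hpos
  linarith

end Integrals

theorem continuousOn_setIntegral_of_continuousOn {X Y : Type*} [TopologicalSpace X]
    [FirstCountableTopology X] [LocallyCompactSpace X] [TopologicalSpace Y] [T2Space Y]
    [MeasurableSpace Y] [OpensMeasurableSpace Y] {ν : Measure Y} [IsFiniteMeasureOnCompacts ν]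
    {f : X → Y → ℝ} {U : Set X} {K : Set Y} (hU : IsOpen U) (hK : IsCompact K)
    (hf : ContinuousOn (Function.uncurry f) (U ×ˢ K)) :
    ContinuousOn (fun x ↦ ∫ y in K, f x y ∂ν) U := by
  intro x₀ hx₀
  obtain ⟨C, hC, hCU, hCc⟩ := local_compact_nhds (hU.mem_nhds hx₀)
  obtain ⟨M, hM⟩ := (hCc.prod hK).exists_bound_of_continuousOn (hf.mono (prod_mono hCU le_rfl))
  have hsec (x : X) (hx : x ∈ U) : ContinuousOn (f x) K :=
    hf.comp (Continuous.prodMk_right x).continuousOn fun y hy ↦ ⟨hx, hy⟩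
  refine ContinuousAt.continuousWithinAt (continuousAt_of_dominated (bound := fun _ ↦ M) ?_ ?_
    (integrableOn_const hK.measure_ne_top) ?_)
  · filter_upwards [hC] with x hx
    exact (hsec x (hCU hx)).aestronglyMeasurable hK.measurableSet
  · filter_upwards [hC] with x hx
    exact (ae_restrict_iff' hK.measurableSet).2 (Eventually.of_forall fun y hy ↦ hM (x, y) ⟨hx, hy⟩)
  · refine (ae_restrict_iff' hK.measurableSet).2 (Eventually.of_forall fun y hy ↦ ?_)
    have : ContinuousWithinAt (fun x ↦ f x y) U x₀ :=
      (hf (x₀, y) ⟨hx₀, hy⟩).comp (f := (·, y)) (Continuous.prodMk_left y).continuousWithinAt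
        fun x hx ↦ ⟨hx, hy⟩
    exact this.continuousAt (hU.mem_nhds hx₀)

noncomputable def morphU (s : ℝ) : ℝ := (s ^ 2 - 1) ^ 2 + (s - 1) ^ 2

lemma morphU_nonneg (s : ℝ) : 0 ≤ morphU s := by unfold morphU; positivity

lemma add_morphU_pos {μ : ℝ} (hμ : 0 < μ) (s : ℝ) : 0 < μ + morphU s :=
  add_pos_of_pos_of_nonneg hμ (morphU_nonneg s)

@[fun_prop]
lemma continuous_morphU : Continuous morphU := by unfold morphU; fun_prop

lemma morphU_strictMonoOn : StrictMonoOn morphU (Ici 1) := by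
  intro s (hs : 1 ≤ s) t (ht : 1 ≤ t) hst
  unfold morphU
  have : (s ^ 2 - 1) ^ 2 < (t ^ 2 - 1) ^ 2 :=
    pow_lt_pow_left₀ (by nlinarith) (by nlinarith) two_ne_zero
  nlinarith

lemma sqrt_add_morphU_le {R μ s : ℝ} (hμ : 0 ≤ μ) (hs : 1 ≤ s) (hsR : s ≤ R) :
    √(μ + morphU s) ≤ (R + 2) * (√μ + (s - 1)) := by
  have hμ' : √μ ^ 2 = μ := sq_sqrt hμ
  have hu : morphU s ≤ (R + 2) ^ 2 * (s - 1) ^ 2 := by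
    have : morphU s = ((s + 1) ^ 2 + 1) * (s - 1) ^ 2 := by unfold morphU; ring
    rw [this]
    gcongr
    nlinarith
  have hR2 : 1 ≤ (R + 2) ^ 2 := by nlinarith
  have hcross : 0 ≤ (R + 2) ^ 2 * (2 * √μ * (s - 1)) := by
    have := sub_nonneg.2 hs
    positivity
  refine sqrt_le_iff.2 ⟨mul_nonneg (by linarith) (by positivity [sub_nonneg.2 hs]), ?_⟩
  nlinarith

lemma morphF_eq_setIntegral {R μ : ℝ} (hR : 1 ≤ R) :
    morphF R μ = (∫ s in Icc 1 R, √(μ + morphU s) / s) *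
      ∫ s in Icc 1 R, 1 / (s * √(μ + morphU s)) := by
  rw [morphF, intervalIntegral.integral_of_le hR, intervalIntegral.integral_of_le hR,
    integral_Icc_eq_integral_Ioc, integral_Icc_eq_integral_Ioc]
  rfl

lemma continuousOn_sqrt_add_morphU_div {R μ : ℝ} :
    ContinuousOn (fun s ↦ √(μ + morphU s) / s) (Icc 1 R) :=
  (continuous_morphU.const_add μ).sqrt.continuousOn.div continuousOn_id
    fun _ hs ↦ (zero_lt_one.trans_le hs.1).ne'

lemma continuousOn_one_div_mul_sqrt_add_morphU {R μ : ℝ} (hμ : 0 < μ) :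
    ContinuousOn (fun s ↦ 1 / (s * √(μ + morphU s))) (Icc 1 R) :=
  continuousOn_const.div (continuousOn_id.mul (continuous_morphU.const_add μ).sqrt.continuousOn)
    fun s hs ↦ mul_ne_zero (zero_lt_one.trans_le hs.1).ne'
      (sqrt_pos.2 (add_morphU_pos hμ s)).ne'

noncomputable def morphKernel (μ : ℝ) (p : ℝ × ℝ) : ℝ :=
  sqrtRatioSum (μ + morphU p.1) (μ + morphU p.2) / (p.1 * p.2)

lemma morphF_eq_half_integral_morphKernel {R μ : ℝ} (hR : 1 ≤ R) (hμ : 0 < μ) :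
    morphF R μ = (∫ p in Icc 1 R ×ˢ Icc 1 R, morphKernel μ p) / 2 := by
  rw [morphF_eq_setIntegral hR, integral_mul_integral_eq_half_integral_symm
    (continuousOn_sqrt_add_morphU_div.integrableOn_compact isCompact_Icc)
    ((continuousOn_one_div_mul_sqrt_add_morphU hμ).integrableOn_compact isCompact_Icc),
    Measure.prod_restrict, ← Measure.volume_eq_prod]
  congr 1
  refine setIntegral_congr_fun (measurableSet_Icc.prod measurableSet_Icc) fun p hp ↦ ?_
  have hs : 0 < p.1 := zero_lt_one.trans_le hp.1.1
  have ht : 0 < p.2 := zero_lt_one.trans_le hp.2.1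
  have hX := sqrt_pos.2 (add_morphU_pos hμ p.1)
  have hY := sqrt_pos.2 (add_morphU_pos hμ p.2)
  simp only [morphKernel, sqrtRatioSum]
  field_simp

lemma integrableOn_morphKernel {R μ : ℝ} (hμ : 0 < μ) :
    IntegrableOn (morphKernel μ) (Icc 1 R ×ˢ Icc 1 R) := by
  refine ContinuousOn.integrableOn_compact (isCompact_Icc.prod isCompact_Icc) ?_
  have hne (s : ℝ) : √(μ + morphU s) ≠ 0 := (sqrt_pos.2 (add_morphU_pos hμ s)).ne'
  unfold morphKernel sqrtRatioSum
  refine ContinuousOn.div (Continuous.continuousOn (by fun_prop (disch := exact fun _ ↦ hne _)))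
    (by fun_prop) fun p hp ↦ ?_
  exact mul_ne_zero (zero_lt_one.trans_le hp.1.1).ne' (zero_lt_one.trans_le hp.2.1).ne'

lemma morphKernel_antitoneOn {p : ℝ × ℝ} (hp : 0 < p.1 * p.2) :
    AntitoneOn (morphKernel · p) (Ioi 0) := fun _ h₁ _ h₂ h₁₂ ↦
  div_le_div_of_nonneg_right (antitoneOn_sqrtRatioSum_add (morphU_nonneg _) (morphU_nonneg _)
    h₁ h₂ h₁₂) hp.le

lemma morphKernel_strictAntiOn {p : ℝ × ℝ} (hp : 0 < p.1 * p.2) (hu : morphU p.1 ≠ morphU p.2) :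
    StrictAntiOn (morphKernel · p) (Ioi 0) := fun _ h₁ _ h₂ h₁₂ ↦
  div_lt_div_of_pos_right (strictAntiOn_sqrtRatioSum_add (morphU_nonneg _) (morphU_nonneg _) hu
    h₁ h₂ h₁₂) hp

theorem morphF_strictAntiOn {R : ℝ} (hR : 1 < R) : StrictAntiOn (morphF R) (Ioi 0) := by
  intro μ₁ h₁ μ₂ h₂ h₁₂
  rw [morphF_eq_half_integral_morphKernel hR.le h₁, morphF_eq_half_integral_morphKernel hR.le h₂]
  refine div_lt_div_of_pos_right ?_ two_pos
  obtain ⟨m, hm₁, hmR⟩ := exists_between hR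
  have hsq : MeasurableSet (Icc 1 R ×ˢ Icc 1 R) := measurableSet_Icc.prod measurableSet_Icc
  have hsub : Ioo 1 m ×ˢ Ioo m R ⊆ Icc 1 R ×ˢ Icc 1 R := prod_mono
    (Ioo_subset_Icc_self.trans (Icc_subset_Icc_right (by linarith)))
    (Ioo_subset_Icc_self.trans (Icc_subset_Icc_left (by linarith)))
  refine integral_lt_integral_of_ae_le_of_lt_on (s := Ioo 1 m ×ˢ Ioo m R)
    (integrableOn_morphKernel h₂) (integrableOn_morphKernel h₁) ?_ ?_ fun p hp ↦ ?_
  · refine (ae_restrict_iff' hsq).2 (Eventually.of_forall fun p hp ↦ ?_)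
    have : 0 < p.1 * p.2 := mul_pos (one_pos.trans_le hp.1.1) (one_pos.trans_le hp.2.1)
    exact morphKernel_antitoneOn this h₁ h₂ h₁₂.le
  · rw [Measure.restrict_apply' hsq, inter_eq_left.2 hsub, Measure.volume_eq_prod,
      Measure.prod_prod, Real.volume_Ioo, Real.volume_Ioo]
    exact mul_ne_zero (ENNReal.ofReal_pos.2 (sub_pos.2 hm₁)).ne'
      (ENNReal.ofReal_pos.2 (sub_pos.2 hmR)).ne'
  · obtain ⟨⟨hs₁, hsm⟩, hmt, -⟩ := hp
    have : 0 < p.1 * p.2 := mul_pos (by linarith) (by linarith)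
    exact morphKernel_strictAntiOn this (morphU_strictMonoOn (mem_Ici.2 hs₁.le)
      (mem_Ici.2 (by linarith)) (hsm.trans hmt)).ne h₁ h₂ h₁₂

lemma integral_Icc_one_div {R : ℝ} (hR : 1 ≤ R) : ∫ s in Icc 1 R, 1 / s = log R := by
  rw [integral_Icc_eq_integral_Ioc, ← intervalIntegral.integral_of_le hR,
    integral_one_div_of_pos one_pos (by linarith), div_one]

theorem log_sq_le_morphF {R μ : ℝ} (hR : 1 ≤ R) (hμ : 0 < μ) : log R ^ 2 ≤ morphF R μ := by
  have hsq : IsCompact (Icc 1 R ×ˢ Icc 1 R) := isCompact_Icc.prod isCompact_Icc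
  have hprod : ∫ p in Icc 1 R ×ˢ Icc 1 R, 1 / p.1 * (1 / p.2) = log R ^ 2 := by
    rw [Measure.volume_eq_prod, setIntegral_prod_mul, integral_Icc_one_div hR, sq]
  have hint : IntegrableOn (fun p : ℝ × ℝ ↦ 2 * (1 / p.1 * (1 / p.2))) (Icc 1 R ×ˢ Icc 1 R) := by
    refine ContinuousOn.integrableOn_compact hsq (continuousOn_const.mul
      ((continuousOn_const.div continuousOn_fst fun p hp ↦ ?_).mul
        (continuousOn_const.div continuousOn_snd fun p hp ↦ ?_)))
    · exact (one_pos.trans_le hp.1.1).ne'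
    · exact (one_pos.trans_le hp.2.1).ne'
  rw [morphF_eq_half_integral_morphKernel hR hμ, le_div_iff₀ two_pos]
  calc log R ^ 2 * 2 = ∫ p in Icc 1 R ×ˢ Icc 1 R, 2 * (1 / p.1 * (1 / p.2)) := by
        rw [integral_const_mul, hprod, mul_comm]
    _ ≤ ∫ p in Icc 1 R ×ˢ Icc 1 R, morphKernel μ p :=
        setIntegral_mono_on hint (integrableOn_morphKernel hμ) hsq.measurableSet fun p hp ↦ by
          have hs : 0 < p.1 := one_pos.trans_le hp.1.1
          have ht : 0 < p.2 := one_pos.trans_le hp.2.1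
          rw [morphKernel, one_div_mul_one_div, ← mul_div_assoc, mul_one]
          exact div_le_div_of_nonneg_right
            (two_le_sqrtRatioSum (add_morphU_pos hμ _) (add_morphU_pos hμ _)) (mul_pos hs ht).le

lemma integrableOn_Icc_one_div {R : ℝ} : IntegrableOn (fun s : ℝ ↦ 1 / s) (Icc 1 R) :=
  ContinuousOn.integrableOn_compact isCompact_Icc
    (continuousOn_const.div continuousOn_id fun _ hs ↦ (one_pos.trans_le hs.1).ne')

lemma setIntegral_sqrt_add_morphU_div_le {R μ : ℝ} (hR : 1 ≤ R) :
    ∫ s in Icc 1 R, √(μ + morphU s) / s ≤ √(μ + morphU R) * log R := by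
  rw [← integral_Icc_one_div hR, ← integral_const_mul]
  refine setIntegral_mono_on (continuousOn_sqrt_add_morphU_div.integrableOn_compact isCompact_Icc)
    (integrableOn_Icc_one_div.const_mul _) measurableSet_Icc fun s hs ↦ ?_
  rw [mul_one_div]
  have := morphU_strictMonoOn.monotoneOn (mem_Ici.2 hs.1) (mem_Ici.2 hR) hs.2
  gcongr
  exact one_pos.trans_le hs.1 |>.le

lemma setIntegral_one_div_mul_sqrt_add_morphU_le {R μ : ℝ} (hR : 1 ≤ R) (hμ : 0 < μ) :
    ∫ s in Icc 1 R, 1 / (s * √(μ + morphU s)) ≤ 1 / √μ * log R := by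
  rw [← integral_Icc_one_div hR, ← integral_const_mul]
  refine setIntegral_mono_on
    ((continuousOn_one_div_mul_sqrt_add_morphU hμ).integrableOn_compact isCompact_Icc)
    (integrableOn_Icc_one_div.const_mul _) measurableSet_Icc fun s hs ↦ ?_
  have := sqrt_pos.2 hμ
  have hs₀ : 0 < s := one_pos.trans_le hs.1
  rw [one_div_mul_one_div, mul_comm s]
  gcongr
  linarith [morphU_nonneg s]

theorem morphF_le {R μ : ℝ} (hR : 1 ≤ R) (hμ : 0 < μ) :
    morphF R μ ≤ √(1 + morphU R / μ) * log R ^ 2 := by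
  have hsqrt : √(1 + morphU R / μ) = √(μ + morphU R) / √μ := by
    rw [← sqrt_div' _ hμ.le, add_div, div_self hμ.ne']
  rw [morphF_eq_setIntegral hR, hsqrt]
  calc _ ≤ (√(μ + morphU R) * log R) * (1 / √μ * log R) :=
        mul_le_mul (setIntegral_sqrt_add_morphU_div_le hR)
          (setIntegral_one_div_mul_sqrt_add_morphU_le hR hμ)
          (setIntegral_nonneg measurableSet_Icc fun s hs ↦ by
            have := one_pos.trans_le hs.1; positivity)
          (by have := log_nonneg hR; positivity)
    _ = √(μ + morphU R) / √μ * log R ^ 2 := by ring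

theorem tendsto_morphF_atTop {R : ℝ} (hR : 1 ≤ R) :
    Tendsto (morphF R) atTop (𝓝 (log R ^ 2)) := by
  have hbound : Tendsto (fun μ ↦ √(1 + morphU R / μ) * log R ^ 2) atTop (𝓝 (log R ^ 2)) := by
    have : Tendsto (fun μ ↦ 1 + morphU R / μ) atTop (𝓝 1) := by
      simpa using tendsto_const_nhds.add (tendsto_const_nhds.div_atTop (tendsto_id (α := ℝ)))
    simpa using (this.sqrt).mul_const (log R ^ 2)
  refine tendsto_of_tendsto_of_tendsto_of_le_of_le' tendsto_const_nhds hbound ?_ ?_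
  · filter_upwards [eventually_gt_atTop 0] with μ hμ using log_sq_le_morphF hR hμ
  · filter_upwards [eventually_gt_atTop 0] with μ hμ using morphF_le hR hμ

lemma setIntegral_one_div_add_sub_one {R ε : ℝ} (hR : 1 ≤ R) (hε : 0 < ε) :
    ∫ s in Icc 1 R, 1 / (s + (ε - 1)) = log (1 + (R - 1) / ε) := by
  rw [integral_Icc_eq_integral_Ioc, ← intervalIntegral.integral_of_le hR,
    intervalIntegral.integral_comp_add_right (fun x ↦ 1 / x),
    integral_one_div_of_pos (by linarith) (by linarith), show 1 + (ε - 1) = ε by ring]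
  congr 1
  field_simp
  ring

lemma log_div_le_setIntegral_one_div_mul_sqrt_add_morphU {R μ : ℝ} (hR : 1 ≤ R) (hμ : 0 < μ) :
    log (1 + (R - 1) / √μ) / (R * (R + 2)) ≤ ∫ s in Icc 1 R, 1 / (s * √(μ + morphU s)) := by
  have hε := sqrt_pos.2 hμ
  have hint : IntegrableOn (fun s ↦ 1 / (s + (√μ - 1))) (Icc 1 R) :=
    (continuousOn_const.div (continuousOn_id.add continuousOn_const) fun s hs ↦ by
      have : (1 : ℝ) ≤ s := hs.1
      dsimp; linarith).integrableOn_compact isCompact_Icc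
  rw [← setIntegral_one_div_add_sub_one hR hε, div_eq_inv_mul, ← integral_const_mul]
  refine setIntegral_mono_on (hint.const_mul _)
    ((continuousOn_one_div_mul_sqrt_add_morphU hμ).integrableOn_compact isCompact_Icc)
    measurableSet_Icc fun s hs ↦ ?_
  have hs₀ : 0 < s := one_pos.trans_le hs.1
  rw [← one_div, one_div_mul_one_div]
  refine one_div_le_one_div_of_le (mul_pos hs₀ (sqrt_pos.2 (add_morphU_pos hμ s))) ?_
  calc s * √(μ + morphU s) ≤ R * ((R + 2) * (√μ + (s - 1))) :=
        mul_le_mul hs.2 (sqrt_add_morphU_le hμ.le hs.1 hs.2) (sqrt_nonneg _) (by linarith)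
    _ = R * (R + 2) * (s + (√μ - 1)) := by ring

lemma continuousOn_sqrt_morphU_div {R : ℝ} :
    ContinuousOn (fun s ↦ √(morphU s) / s) (Icc 1 R) := by
  simpa using continuousOn_sqrt_add_morphU_div (μ := 0) (R := R)

lemma setIntegral_sqrt_morphU_div_pos {R : ℝ} (hR : 1 < R) :
    0 < ∫ s in Icc 1 R, √(morphU s) / s := by
  rw [integral_Icc_eq_integral_Ioc, ← intervalIntegral.integral_of_le hR.le]
  refine intervalIntegral.intervalIntegral_pos_of_pos_on
    (continuousOn_sqrt_morphU_div.intervalIntegrable_of_Icc hR.le) (fun s hs ↦ ?_) hR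
  have hu : 0 < morphU s := by
    simpa [morphU] using morphU_strictMonoOn (mem_Ici.2 le_rfl) (mem_Ici.2 hs.1.le) hs.1
  exact div_pos (sqrt_pos.2 hu) (one_pos.trans hs.1)

theorem le_morphF {R μ : ℝ} (hR : 1 ≤ R) (hμ : 0 < μ) :
    (∫ s in Icc 1 R, √(morphU s) / s) * (log (1 + (R - 1) / √μ) / (R * (R + 2))) ≤ morphF R μ := by
  rw [morphF_eq_setIntegral hR]
  refine mul_le_mul ?_ (log_div_le_setIntegral_one_div_mul_sqrt_add_morphU hR hμ) ?_ ?_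
  · refine setIntegral_mono_on (continuousOn_sqrt_morphU_div.integrableOn_compact isCompact_Icc)
      (continuousOn_sqrt_add_morphU_div.integrableOn_compact isCompact_Icc) measurableSet_Icc
      fun s hs ↦ ?_
    gcongr
    · exact (one_pos.trans_le hs.1).le
    · linarith
  · have : 0 ≤ log (1 + (R - 1) / √μ) := log_nonneg (by
      have : 0 ≤ (R - 1) / √μ := div_nonneg (by linarith) (sqrt_nonneg _)
      linarith)
    positivity
  · exact setIntegral_nonneg measurableSet_Icc fun s hs ↦ by
      have := one_pos.trans_le hs.1; positivity

theorem tendsto_morphF_nhdsGT_zero {R : ℝ} (hR : 1 < R) : Tendsto (morphF R) (𝓝[>] 0) atTop := by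
  have hinv : Tendsto (fun μ : ℝ ↦ (R - 1) / √μ) (𝓝[>] 0) atTop := by
    simp_rw [div_eq_mul_inv, ← sqrt_inv]
    exact (tendsto_sqrt_atTop.comp tendsto_inv_nhdsGT_zero).const_mul_atTop (by linarith)
  have hlog := (tendsto_log_atTop.comp (tendsto_atTop_add_const_left _ 1 hinv)).atTop_div_const
    (by positivity : 0 < R * (R + 2))
  refine tendsto_atTop_mono' _ ?_ (hlog.const_mul_atTop (setIntegral_sqrt_morphU_div_pos hR))
  filter_upwards [self_mem_nhdsWithin] with μ hμ using le_morphF hR.le hμ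

theorem continuousOn_morphF {R : ℝ} (hR : 1 ≤ R) : ContinuousOn (morphF R) (Ioi 0) := by
  have hne {p : ℝ × ℝ} (hp : p ∈ Ioi 0 ×ˢ Icc 1 R) : p.2 ≠ 0 := (one_pos.trans_le hp.2.1).ne'
  have h₁ : ContinuousOn (fun μ ↦ ∫ s in Icc 1 R, √(μ + morphU s) / s) (Ioi 0) :=
    continuousOn_setIntegral_of_continuousOn isOpen_Ioi isCompact_Icc
      ((Continuous.continuousOn (by fun_prop)).div continuousOn_snd fun _ hp ↦ hne hp)
  have h₂ : ContinuousOn (fun μ ↦ ∫ s in Icc 1 R, 1 / (s * √(μ + morphU s))) (Ioi 0) :=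
    continuousOn_setIntegral_of_continuousOn isOpen_Ioi isCompact_Icc
      (continuousOn_const.div (Continuous.continuousOn (by fun_prop)) fun p hp ↦
        mul_ne_zero (hne hp) (sqrt_pos.2 (add_morphU_pos hp.1 _)).ne')
  exact (h₁.mul h₂).congr fun μ _ ↦ morphF_eq_setIntegral hR

theorem stmt_5 (R A : ℝ) (hR : 1 < R) (hA : (Real.log R) ^ 2 < A) :
    ∃! μ : ℝ, 0 < μ ∧ morphF R μ = A := by
  obtain ⟨μ, hμ, hμA⟩ := isPreconnected_Ioi.intermediate_value_Ioi (l₂ := 𝓝[>] 0)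
    (le_principal_iff.2 (Ioi_mem_atTop 0)) inf_le_right (continuousOn_morphF hR.le)
    (tendsto_morphF_atTop hR.le) (tendsto_morphF_nhdsGT_zero hR) hA
  exact ⟨μ, ⟨hμ, hμA⟩, fun ν ⟨hν, hνA⟩ ↦ (morphF_strictAntiOn hR).injOn hν hμ (hνA.trans hμA.symm)⟩
end

section
/- Let ψ : [0,1] → ℝ be absolutely continuous with ψ(0) = 1, ψ(1) = R > 1, and define h(t) = max{1, ψ(t)}. Then ∫_0^1 (h'/h)² dt ≤ ∫_0^1 (ψ'/ψ)² dt and J(h) ≤ J(ψ), where J(φ) = ∫_0^1 ((φ²-1)² + (φ-1)²) dt. Moreover, if ψ < 1 on a set of positive measure then J(h) < J(ψ). -/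
/-! Both integrands for `h = max 1 ψ` are truncations of the corresponding integrands for `ψ`:
they agree with them where `ψ > 1` and vanish elsewhere. Truncating a nonnegative integrable
function to a set can only lower its integral, strictly so when positive values are discarded
on a set of positive measure, and the integrand of `J` is positive wherever `ψ < 1`. -/

open MeasureTheory

namespace MeasureTheory

variable {α : Type*} [MeasurableSpace α] {μ : Measure α} {s : Set α} {g : α → ℝ}

theorem integral_indicator_le_integral (hg : Integrable g μ) (hg0 : 0 ≤ᵐ[μ] g) :
    ∫ x, s.indicator g x ∂μ ≤ ∫ x, g x ∂μ := by
  refine integral_mono_of_nonneg ?_ hg ?_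
  · filter_upwards [hg0] with x hx using Set.indicator_nonneg (fun _ _ => hx) x
  · filter_upwards [hg0] with x hx using Set.indicator_le_self' (fun _ _ => hx) x

theorem integral_indicator_lt_integral (hs : NullMeasurableSet s μ) (hg : Integrable g μ)
    (hg0 : 0 ≤ᵐ[μ] g) (hpos : 0 < μ (Function.support g ∩ sᶜ)) :
    ∫ x, s.indicator g x ∂μ < ∫ x, g x ∂μ := by
  have hcompl : 0 < ∫ x in sᶜ, g x ∂μ :=
    (setIntegral_pos_iff_support_of_nonneg_ae (ae_restrict_of_ae hg0) hg.integrableOn).2 hpos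
  rw [integral_indicator₀ hs, ← integral_add_compl₀ hs hg]
  linarith

end MeasureTheory

theorem sq_ite_div_max_one {α : Type*} (ψ ψ' : α → ℝ) :
    (fun t => ((if 1 < ψ t then ψ' t else 0) / max 1 (ψ t)) ^ 2) =
      {t | 1 < ψ t}.indicator (fun t => (ψ' t / ψ t) ^ 2) := by
  ext t
  by_cases h : 1 < ψ t
  · simp [h, max_eq_right h.le]
  · simp [h]

/-- The integrand of `J`. -/
def energyDensity (s : ℝ) : ℝ := (s ^ 2 - 1) ^ 2 + (s - 1) ^ 2

theorem energyDensity_nonneg (s : ℝ) : 0 ≤ energyDensity s := by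
  unfold energyDensity; positivity

theorem energyDensity_pos_of_lt_one {s : ℝ} (hs : s < 1) : 0 < energyDensity s := by
  unfold energyDensity; nlinarith [sq_nonneg (s ^ 2 - 1)]

theorem energyDensity_max_one {α : Type*} (ψ : α → ℝ) :
    (fun t => energyDensity (max 1 (ψ t))) =
      {t | 1 ≤ ψ t}.indicator (fun t => energyDensity (ψ t)) := by
  ext t
  by_cases h : 1 ≤ ψ t
  · simp [h]
  · simp [h, max_eq_left (not_le.1 h).le, energyDensity]

theorem stmt_9_general (ψ ψ' : ℝ → ℝ)
    (hcont : ContinuousOn ψ (Set.Icc 0 1))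
    (hint1 : IntervalIntegrable (fun t => (ψ' t / ψ t) ^ 2) volume 0 1)
    (hint2 : IntervalIntegrable
      (fun t => ((ψ t ^ 2 - 1) ^ 2 + (ψ t - 1) ^ 2)) volume 0 1) :
    (∫ t in (0:ℝ)..1, ((if 1 < ψ t then ψ' t else 0) / max 1 (ψ t)) ^ 2)
        ≤ ∫ t in (0:ℝ)..1, (ψ' t / ψ t) ^ 2 ∧
    (∫ t in (0:ℝ)..1, (((max 1 (ψ t)) ^ 2 - 1) ^ 2 + (max 1 (ψ t) - 1) ^ 2))
        ≤ ∫ t in (0:ℝ)..1, ((ψ t ^ 2 - 1) ^ 2 + (ψ t - 1) ^ 2) ∧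
    (0 < volume {t : ℝ | t ∈ Set.Icc (0:ℝ) 1 ∧ ψ t < 1} →
      (∫ t in (0:ℝ)..1, (((max 1 (ψ t)) ^ 2 - 1) ^ 2 + (max 1 (ψ t) - 1) ^ 2))
        < ∫ t in (0:ℝ)..1, ((ψ t ^ 2 - 1) ^ 2 + (ψ t - 1) ^ 2)) := by
  have hψ : AEMeasurable ψ (volume.restrict (Set.Icc 0 1)) :=
    hcont.aemeasurable measurableSet_Icc
  have hG : IntegrableOn (fun t => (ψ' t / ψ t) ^ 2) (Set.Icc 0 1) :=
    (integrableOn_Icc_iff_integrableOn_Ioc (by finiteness)).2 hint1.1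
  have hE : IntegrableOn (fun t => energyDensity (ψ t)) (Set.Icc 0 1) :=
    (integrableOn_Icc_iff_integrableOn_Ioc (by finiteness)).2 hint2.1
  have hE0 : 0 ≤ᵐ[volume.restrict (Set.Icc 0 1)] fun t => energyDensity (ψ t) :=
    ae_of_all _ fun t => energyDensity_nonneg _
  simp only [intervalIntegral.integral_of_le zero_le_one, ← integral_Icc_eq_integral_Ioc,
    ← energyDensity.eq_1]
  rw [sq_ite_div_max_one, energyDensity_max_one]
  refine ⟨integral_indicator_le_integral hG (ae_of_all _ fun t => sq_nonneg _),
    integral_indicator_le_integral hE hE0, fun hpos => ?_⟩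
  refine integral_indicator_lt_integral (nullMeasurableSet_le aemeasurable_const hψ) hE hE0 ?_
  rw [Measure.restrict_apply' measurableSet_Icc]
  refine hpos.trans_le (measure_mono fun t ⟨ht, hψt⟩ => ⟨⟨?_, not_le.2 hψt⟩, ht⟩)
  exact (energyDensity_pos_of_lt_one hψt).ne'

theorem stmt_9 (R : ℝ) (hR : 1 < R) (ψ ψ' : ℝ → ℝ)
    (hac : ∀ᵐ t ∂(volume.restrict (Set.Ioo (0:ℝ) 1)), HasDerivAt ψ (ψ' t) t)
    (hcont : ContinuousOn ψ (Set.Icc 0 1))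
    (hb0 : ψ 0 = 1) (hb1 : ψ 1 = R)
    (hint1 : IntervalIntegrable (fun t => (ψ' t / ψ t) ^ 2) volume 0 1)
    (hint2 : IntervalIntegrable
      (fun t => ((ψ t ^ 2 - 1) ^ 2 + (ψ t - 1) ^ 2)) volume 0 1) :
    (∫ t in (0:ℝ)..1, ((if 1 < ψ t then ψ' t else 0) / max 1 (ψ t)) ^ 2)
        ≤ ∫ t in (0:ℝ)..1, (ψ' t / ψ t) ^ 2 ∧
    (∫ t in (0:ℝ)..1, (((max 1 (ψ t)) ^ 2 - 1) ^ 2 + (max 1 (ψ t) - 1) ^ 2))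
        ≤ ∫ t in (0:ℝ)..1, ((ψ t ^ 2 - 1) ^ 2 + (ψ t - 1) ^ 2) ∧
    (0 < volume {t : ℝ | t ∈ Set.Icc (0:ℝ) 1 ∧ ψ t < 1} →
      (∫ t in (0:ℝ)..1, (((max 1 (ψ t)) ^ 2 - 1) ^ 2 + (max 1 (ψ t) - 1) ^ 2))
        < ∫ t in (0:ℝ)..1, ((ψ t ^ 2 - 1) ^ 2 + (ψ t - 1) ^ 2)) :=
  stmt_9_general ψ ψ' hcont hint1 hint2
end

section
/- Let R > 0 and define F(q, r) = π - 2πR² + (πR⁴/(3r²))(1 + q² + (r-1)r)(1 + q² + r + r²) for (q, r) ∈ ℝ × (0,∞). Then (0, 1) is the unique critical point of F, F is convex on ℝ × (0,∞), (0,1) is the unique global minimizer of F, and F(0,1) = π(R²-1)². -/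
/-- The reduced energy function `F(q,r)` from the paper. -/
noncomputable def redF (R : ℝ) (p : ℝ × ℝ) : ℝ :=
  Real.pi - 2 * Real.pi * R ^ 2 +
    (Real.pi * R ^ 4 / (3 * p.2 ^ 2)) * (1 + p.1 ^ 2 + (p.2 - 1) * p.2) *
      (1 + p.1 ^ 2 + p.2 + p.2 ^ 2)

/-! On the half-plane `r > 0` one has
`F = π(R² - 1)² + πR⁴/(3r²) · (q² + (r - 1)²)(q² + (r + 1)²)`, so `(0, 1)` is the strict global
minimizer, and `F = πR⁴/3 · u² + const` with `u = q²/r + 1/r + r` positive and convex (`q²/r` is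
the quadratic-over-linear function), so `F` is convex. A critical point of a convex function is a
global minimizer, hence it is `(0, 1)`. -/

open Set

theorem ConvexOn.isMinOn_of_hasFDerivAt_eq_zero {E : Type*} [NormedAddCommGroup E]
    [NormedSpace ℝ E] {s : Set E} {f : E → ℝ} {x : E} (hf : ConvexOn ℝ s f) (hx : x ∈ s)
    (hf' : HasFDerivAt f (0 : E →L[ℝ] ℝ) x) : IsMinOn f s x := by
  intro y hy
  let g : ℝ →ᵃ[ℝ] E := AffineMap.lineMap x y
  have hg : ConvexOn ℝ (g ⁻¹' s) (f ∘ g) := hf.comp_affineMap g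
  have hderiv : HasDerivAt (f ∘ g) 0 0 := by
    simpa using hf'.comp_hasDerivAt_of_eq (0 : ℝ) AffineMap.hasDerivAt_lineMap (by simp)
  have hslope := hg.le_slope_of_hasDerivAt (x := 0) (y := 1) (by simpa [g]) (by simpa [g])
    one_pos hderiv
  simpa [g, slope_def_field] using hslope

theorem add_sq_div_add_le {x y u v : ℝ} (hu : 0 < u) (hv : 0 < v) :
    (x + y) ^ 2 / (u + v) ≤ x ^ 2 / u + y ^ 2 / v := by
  simpa [Fin.sum_univ_two] using
    Finset.sq_sum_div_le_sum_sq_div Finset.univ ![x, y] (g := ![u, v])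
      (by simp [Fin.forall_fin_two, hu, hv])

theorem convexOn_sq_div : ConvexOn ℝ (univ ×ˢ Ioi 0) fun p : ℝ × ℝ ↦ p.1 ^ 2 / p.2 := by
  refine convexOn_iff_forall_pos.2 ⟨convex_univ.prod (convex_Ioi 0), ?_⟩
  rintro ⟨x₁, x₂⟩ ⟨-, hx₂ : 0 < x₂⟩ ⟨y₁, y₂⟩ ⟨-, hy₂ : 0 < y₂⟩ a b ha hb -
  simp only [Prod.smul_mk, Prod.mk_add_mk, smul_eq_mul]
  calc (a * x₁ + b * y₁) ^ 2 / (a * x₂ + b * y₂)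
      ≤ (a * x₁) ^ 2 / (a * x₂) + (b * y₁) ^ 2 / (b * y₂) :=
        add_sq_div_add_le (mul_pos ha hx₂) (mul_pos hb hy₂)
    _ = a * (x₁ ^ 2 / x₂) + b * (y₁ ^ 2 / y₂) := by field_simp

theorem convexOn_inv_snd : ConvexOn ℝ (univ ×ˢ Ioi 0) fun p : ℝ × ℝ ↦ p.2⁻¹ := by
  rw [univ_prod]
  refine ((convexOn_zpow (-1)).comp_linearMap (LinearMap.snd ℝ ℝ ℝ)).congr fun p _ ↦ ?_
  simp

section redF

variable (R : ℝ) {q r : ℝ}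

theorem redF_eq_mul_sq_add (hr : 0 < r) :
    redF R (q, r) = Real.pi * R ^ 4 / 3 * (q ^ 2 / r + r⁻¹ + r) ^ 2 +
      (Real.pi - 2 * Real.pi * R ^ 2 - Real.pi * R ^ 4 / 3) := by
  unfold redF
  field_simp
  ring

theorem redF_eq_add_mul (hr : 0 < r) :
    redF R (q, r) = Real.pi * (R ^ 2 - 1) ^ 2 +
      Real.pi * R ^ 4 / (3 * r ^ 2) * ((q ^ 2 + (r - 1) ^ 2) * (q ^ 2 + (r + 1) ^ 2)) := by
  unfold redF
  field_simp
  ring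

theorem redF_zero_one : redF R (0, 1) = Real.pi * (R ^ 2 - 1) ^ 2 := by
  simp [redF_eq_add_mul R one_pos]

theorem convexOn_redF : ConvexOn ℝ (univ ×ˢ Ioi 0) (redF R) := by
  have hu : ConvexOn ℝ (univ ×ˢ Ioi 0) fun p : ℝ × ℝ ↦ p.1 ^ 2 / p.2 + p.2⁻¹ + p.2 :=
    (convexOn_sq_div.add convexOn_inv_snd).add
      ((LinearMap.snd ℝ ℝ ℝ).convexOn (convex_univ.prod (convex_Ioi 0)))
  have hu₀ : ∀ p ∈ univ ×ˢ Ioi (0 : ℝ), 0 ≤ p.1 ^ 2 / p.2 + p.2⁻¹ + p.2 := by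
    rintro ⟨q, r⟩ ⟨-, hr : 0 < r⟩
    positivity
  refine (((hu.pow hu₀ 2).smul (by positivity : 0 ≤ Real.pi * R ^ 4 / 3)).add_const
    (Real.pi - 2 * Real.pi * R ^ 2 - Real.pi * R ^ 4 / 3)).congr ?_
  rintro ⟨q, r⟩ ⟨-, hr : 0 < r⟩
  simp [redF_eq_mul_sq_add R hr]

theorem isMinOn_redF : IsMinOn (redF R) (univ ×ˢ Ioi 0) (0, 1) := by
  rintro ⟨q, r⟩ ⟨-, hr : 0 < r⟩
  show redF R (0, 1) ≤ redF R (q, r)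
  rw [redF_zero_one, redF_eq_add_mul R hr, le_add_iff_nonneg_right]
  positivity

theorem redF_zero_one_lt (hR : R ≠ 0) (hr : 0 < r) (hne : (q, r) ≠ (0, 1)) :
    redF R (0, 1) < redF R (q, r) := by
  have hpos : 0 < q ^ 2 + (r - 1) ^ 2 := by
    by_contra! h
    have hq : q = 0 := by nlinarith [sq_nonneg q, sq_nonneg (r - 1)]
    have hr₁ : r = 1 := by nlinarith [sq_nonneg q, sq_nonneg (r - 1)]
    exact hne (by rw [hq, hr₁])
  rw [redF_zero_one, redF_eq_add_mul R hr, lt_add_iff_pos_right]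
  have : 0 < q ^ 2 + (r + 1) ^ 2 := by positivity
  positivity

theorem differentiableAt_redF {p : ℝ × ℝ} (hp : 0 < p.2) : DifferentiableAt ℝ (redF R) p := by
  have : 3 * p.2 ^ 2 ≠ 0 := by positivity
  unfold redF
  fun_prop (disch := assumption)

end redF

theorem stmt_13 (R : ℝ) (hR : 0 < R) :
    (∀ p : ℝ × ℝ, 0 < p.2 → (fderiv ℝ (redF R) p = 0 ↔ p = (0, 1))) ∧
    ConvexOn ℝ ((Set.univ : Set ℝ) ×ˢ Set.Ioi (0:ℝ)) (redF R) ∧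
    (∀ p : ℝ × ℝ, 0 < p.2 → p ≠ (0, 1) → redF R (0, 1) < redF R p) ∧
    redF R (0, 1) = Real.pi * (R ^ 2 - 1) ^ 2 := by
  have hlt : ∀ p : ℝ × ℝ, 0 < p.2 → p ≠ (0, 1) → redF R (0, 1) < redF R p :=
    fun p hp hne ↦ redF_zero_one_lt R hR.ne' hp hne
  have h01 : ((0 : ℝ), (1 : ℝ)) ∈ univ ×ˢ Ioi (0 : ℝ) := by simp
  refine ⟨fun p hp ↦ ⟨fun hcrit ↦ ?_, ?_⟩, convexOn_redF R, hlt, redF_zero_one R⟩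
  · by_contra hne
    have hmin := (convexOn_redF R).isMinOn_of_hasFDerivAt_eq_zero ⟨trivial, hp⟩
      (hcrit ▸ (differentiableAt_redF R hp).hasFDerivAt)
    exact (hmin h01).not_gt (hlt p hp hne)
  · rintro rfl
    have hopen : IsOpen (univ ×ˢ Ioi (0 : ℝ)) := (isOpen_univ (X := ℝ)).prod isOpen_Ioi
    exact ((isMinOn_redF R).isLocalMin (hopen.mem_nhds h01)).fderiv_eq_zero
end
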